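/- Suppose X and Y are complete metric spaces, f₊ is lower semicontinuous on a neighbourhood of (x̄,ȳ), and conditions (P1)–(P2) hold. Then f has an error bound with respect to x at (x̄,ȳ) provided that any one of the following holds: (a) \overline{|∇f|}^◇(x̄,ȳ) > 0; (b) liminf_{x→x̄, f(x,y)↓0} f(x,y)/d(x,x̄) > 0; (c) \overline{|∇f|}^{>}(x̄,ȳ) > 0; (d) \overline{|∇f|}^{>+}(x̄,ȳ) > 0. Moreover, condition (a) is also necessary for the error bound property of f at (x̄,ȳ). -/

import Mathlib

open Filter Metric Set Topology
open scoped Classical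

noncomputable section

namespace HolderPaper

/-- Extended-real quotient `a / d` of an extended real by a nonnegative real,
with the convention that division by `0` yields `⊤`. -/
def equot (a : EReal) (d : ℝ) : EReal := if d = 0 then ⊤ else a * ((d⁻¹ : ℝ) : EReal)

section MetricDefs

variable {X Y : Type*} [MetricSpace X] [MetricSpace Y]

/-- The asymmetric maximum-type distance `d_ρ((x,y),(u,v)) = max{d(x,u), ρ d(y,v)}`. -/
def drho (ρ : ℝ) (p q : X × Y) : ℝ := max (dist p.1 q.1) (ρ * dist p.2 q.2)

/-- Positive part `f₊`. -/
def fplus (f : X × Y → EReal) (p : X × Y) : EReal := max (f p) 0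

/-- Condition (P1): `f(x,y) > 0` whenever `y ≠ ybar`. -/
def P1 (f : X × Y → EReal) (ybar : Y) : Prop := ∀ p : X × Y, p.2 ≠ ybar → 0 < f p

/-- Condition (P2): `liminf_{f(x,y)↓0} f(x,y)/d(y,ybar) > 0`. -/
def P2 (f : X × Y → EReal) (ybar : Y) : Prop :=
  0 < liminf (fun p : X × Y => equot (f p) (dist p.2 ybar)) ((𝓝[>] (0 : EReal)).comap f)

/-- The lower 0-level set `S(f) = {x | f(x,ybar) ≤ 0}`. -/
def Sf (f : X × Y → EReal) (ybar : Y) : Set X := {x | f (x, ybar) ≤ 0}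

/-- The error bound modulus `Er f(xbar,ybar)`:
`liminf` of `f(x,y)/d(x,S(f))` over pairs `(x,y)` with `f(x,y) > 0` as `x → xbar`. -/
def erMod (f : X × Y → EReal) (xbar : X) (ybar : Y) : EReal :=
  liminf (fun p : X × Y => equot (f p) (infDist p.1 (Sf f ybar)))
    ((𝓝 xbar).comap Prod.fst ⊓ 𝓟 {p : X × Y | 0 < f p})

/-- `f` has an error bound w.r.t. `x` at `(xbar,ybar)` with constant `τ`. -/
def hasErrorBound (f : X × Y → EReal) (xbar : X) (ybar : Y) (τ : ℝ) : Prop :=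
  ∃ U ∈ 𝓝 xbar, ∀ x ∈ U, ∀ y : Y, ((τ * infDist x (Sf f ybar) : ℝ) : EReal) ≤ fplus f (x, y)

/-- The nonlocal ρ-slope `|∇f|◇_ρ(x,y)` (set to `⊤` if `f(x,y) = ⊤`). -/
def nslope (f : X × Y → EReal) (ρ : ℝ) (p : X × Y) : EReal :=
  if f p = ⊤ then ⊤
  else ⨆ (q : X × Y) (_ : q ≠ p), equot (max (f p - fplus f q) 0) (drho ρ p q)

/-- The (local) ρ-slope `|∇f|_ρ(x,y)`. -/
def lslope (f : X × Y → EReal) (ρ : ℝ) (p : X × Y) : EReal :=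
  limsup (fun q : X × Y => equot (max (f p - f q) 0) (drho ρ q p)) (𝓝[≠] p)

/-- The uniform strict outer slope `\overline{|∇f|}^◇(xbar,ybar)`
(`lim_{ρ↓0}` of a quantity nonincreasing in `ρ`, i.e. the supremum over `ρ > 0`). -/
def uss (f : X × Y → EReal) (xbar : X) (ybar : Y) : EReal :=
  ⨆ (ρ : ℝ) (_ : 0 < ρ),
    ⨅ (p : X × Y) (_ : dist p.1 xbar < ρ ∧ 0 < f p ∧ f p < (ρ : EReal)), nslope f ρ p

/-- The strict outer slope `\overline{|∇f|}^{>}(xbar,ybar)`. -/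
def sos (f : X × Y → EReal) (xbar : X) (ybar : Y) : EReal :=
  ⨆ (ρ : ℝ) (_ : 0 < ρ),
    ⨅ (p : X × Y) (_ : dist p.1 xbar < ρ ∧ 0 < f p ∧ f p < (ρ : EReal)), lslope f ρ p

/-- The modified strict outer slope `\overline{|∇f|}^{>+}(xbar,ybar)`. -/
def msos (f : X × Y → EReal) (xbar : X) (ybar : Y) : EReal :=
  ⨆ (ρ : ℝ) (_ : 0 < ρ),
    ⨅ (p : X × Y) (_ : dist p.1 xbar < ρ ∧ 0 < f p ∧ f p < (ρ : EReal)),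
      max (lslope f ρ p) (equot (f p) (dist p.1 xbar))

/-- Graph of a set-valued mapping. -/
def gph (F : X → Set Y) : Set (X × Y) := {p | p.2 ∈ F p.1}

/-- Inverse image `F⁻¹(ybar)`. -/
def Finv (F : X → Set Y) (ybar : Y) : Set X := {x | ybar ∈ F x}

/-- The function `f(x,y) = (d(y,ybar))^q` on `gph F`, `+∞` elsewhere. -/
def fFq (F : X → Set Y) (ybar : Y) (qq : ℝ) : X × Y → EReal :=
  fun p => if p ∈ gph F then ((dist p.2 ybar ^ qq : ℝ) : EReal) else ⊤

/-- The function `f(x,y) = ‖y - ybar‖` on `gph F`, `+∞` elsewhere (case `q = 1`). -/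
def fF1 (F : X → Set Y) (ybar : Y) : X × Y → EReal :=
  fun p => if p ∈ gph F then ((dist p.2 ybar : ℝ) : EReal) else ⊤

/-- The ρ-slope `|∇F|_ρ(x,y)` of a set-valued mapping at `(x,y) ∈ gph F`. -/
def FslopeR (F : X → Set Y) (ybar : Y) (ρ : ℝ) (p : X × Y) : EReal :=
  limsup (fun u : X × Y => equot ((max (dist p.2 ybar - dist u.2 ybar) 0 : ℝ) : EReal) (drho ρ u p))
    (𝓝[gph F \ {p}] p)

/-- The nonlocal (q,ρ)-slope `|∇F|◇_{q,ρ}(x,y)` of a set-valued mapping. -/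
def FnslopeQ (F : X → Set Y) (ybar : Y) (qq ρ : ℝ) (p : X × Y) : EReal :=
  ⨆ (u : X × Y) (_ : u ∈ gph F ∧ u ≠ p),
    equot ((max (dist p.2 ybar ^ qq - dist u.2 ybar ^ qq) 0 : ℝ) : EReal) (drho ρ u p)

/-- The uniform strict q-slope `\overline{|∇F|}^◇_q(xbar,ybar)`. -/
def ussFq (F : X → Set Y) (xbar : X) (ybar : Y) (qq : ℝ) : EReal :=
  ⨆ (ρ : ℝ) (_ : 0 < ρ),
    ⨅ (p : X × Y)
      (_ : p ∈ gph F ∧ dist p.1 xbar < ρ ∧ dist p.2 ybar < ρ ∧ p.1 ∉ Finv F ybar),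
      FnslopeQ F ybar qq ρ p

/-- The strict q-slope `\overline{|∇F|}_q(xbar,ybar)`. -/
def sosFq (F : X → Set Y) (xbar : X) (ybar : Y) (qq : ℝ) : EReal :=
  (qq : EReal) *
    ⨆ (ρ : ℝ) (_ : 0 < ρ),
      ⨅ (p : X × Y)
        (_ : p ∈ gph F ∧ dist p.1 xbar < ρ ∧ dist p.2 ybar < ρ ∧ p.1 ∉ Finv F ybar),
        ((dist p.2 ybar ^ (qq - 1) : ℝ) : EReal) * FslopeR F ybar ρ p

/-- The modified strict q-slope `\overline{|∇F|}^{+}_q(xbar,ybar)`. -/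
def msosFq (F : X → Set Y) (xbar : X) (ybar : Y) (qq : ℝ) : EReal :=
  ⨆ (ρ : ℝ) (_ : 0 < ρ),
    ⨅ (p : X × Y)
      (_ : p ∈ gph F ∧ dist p.1 xbar < ρ ∧ dist p.2 ybar < ρ ∧ p.1 ∉ Finv F ybar),
      max (((qq * dist p.2 ybar ^ (qq - 1) : ℝ) : EReal) * FslopeR F ybar ρ p)
        (equot ((dist p.2 ybar ^ qq : ℝ) : EReal) (dist p.1 xbar))

/-- The Hölder subregularity modulus of order `q`:
`liminf_{x→xbar, x∉F⁻¹(ybar)} (d(ybar,F(x)))^q / d(x,F⁻¹(ybar))`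
(with `d(ybar,∅) = +∞`). -/
def srq (F : X → Set Y) (xbar : X) (ybar : Y) (qq : ℝ) : EReal :=
  liminf
    (fun x : X =>
      equot (if F x = ∅ then ⊤ else ((infDist ybar (F x) ^ qq : ℝ) : EReal))
        (infDist x (Finv F ybar)))
    (𝓝[(Finv F ybar)ᶜ] xbar)

end MetricDefs

section NormedDefs

variable {X Y : Type*} [NormedAddCommGroup X] [NormedSpace ℝ X]
  [NormedAddCommGroup Y] [NormedSpace ℝ Y]

/-- The Fréchet subdifferential of `f : X × Y → ℝ∪{+∞}` at `p`, as a set of pairs of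
continuous linear functionals (empty when `f p = ⊤`). -/
def fsubdiff (f : X × Y → EReal) (p : X × Y) : Set ((X →L[ℝ] ℝ) × (Y →L[ℝ] ℝ)) :=
  {φ | f p ≠ ⊤ ∧ 0 ≤ liminf
      (fun q : X × Y =>
        equot (f q - f p - ((φ.1 (q.1 - p.1) + φ.2 (q.2 - p.2) : ℝ) : EReal)) (dist q p))
      (𝓝[≠] p)}

/-- The subdifferential ρ-slope `|∂f|_ρ(x,y)`. -/
def sdslope (f : X × Y → EReal) (ρ : ℝ) (p : X × Y) : EReal :=
  ⨅ (φ : (X →L[ℝ] ℝ) × (Y →L[ℝ] ℝ)) (_ : φ ∈ fsubdiff f p ∧ ‖φ.2‖ < ρ), (‖φ.1‖ : EReal)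

/-- The strict outer subdifferential slope `\overline{|∂f|}^{>}(xbar,ybar)`. -/
def ssds (f : X × Y → EReal) (xbar : X) (ybar : Y) : EReal :=
  ⨆ (ρ : ℝ) (_ : 0 < ρ),
    ⨅ (p : X × Y) (_ : dist p.1 xbar < ρ ∧ 0 < f p ∧ f p < (ρ : EReal)), sdslope f ρ p

/-- The modified strict outer subdifferential slope `\overline{|∂f|}^{>+}(xbar,ybar)`. -/
def mssds (f : X × Y → EReal) (xbar : X) (ybar : Y) : EReal :=
  ⨆ (ρ : ℝ) (_ : 0 < ρ),
    ⨅ (p : X × Y) (_ : dist p.1 xbar < ρ ∧ 0 < f p ∧ f p < (ρ : EReal)),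
      max (sdslope f ρ p) (equot (f p) (dist p.1 xbar))

/-- `f` is convex on the set `U` (with extended-real values). -/
def convexOnE (U : Set (X × Y)) (f : X × Y → EReal) : Prop :=
  Convex ℝ U ∧ ∀ p ∈ U, ∀ q ∈ U, ∀ t : ℝ, 0 ≤ t → t ≤ 1 →
    f (t • p + (1 - t) • q) ≤ (t : EReal) * f p + ((1 - t : ℝ) : EReal) * f q

/-- The Fréchet normal cone to `Ω ⊂ X × Y` at `p ∈ Ω`. -/
def ncone (Ω : Set (X × Y)) (p : X × Y) : Set ((X →L[ℝ] ℝ) × (Y →L[ℝ] ℝ)) :=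
  {φ | limsup
      (fun q : X × Y =>
        equot (((φ.1 (q.1 - p.1) + φ.2 (q.2 - p.2) : ℝ)) : EReal) (dist q p))
      (𝓝[Ω \ {p}] p) ≤ 0}

/-- The Fréchet coderivative `D*F(x,y)(y*)`. -/
def coderiv (F : X → Set Y) (p : X × Y) (ys : Y →L[ℝ] ℝ) : Set (X →L[ℝ] ℝ) :=
  {xs | (xs, -ys) ∈ ncone (gph F) p}

/-- The (normalized) duality mapping `J(y) = {y* : ‖y*‖ = 1, ⟨y*,y⟩ = ‖y‖}`. -/
def Jdual (y : Y) : Set (Y →L[ℝ] ℝ) := {ys | ‖ys‖ = 1 ∧ ys y = ‖y‖}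

/-- The subdifferential ρ-slope of `F` at `(x,y) ∈ gph F`:
`inf{‖x*‖ : x* ∈ D*F(x,y)(J(y-ybar) + ρ𝔹*)}`. -/
def FsdSlope (F : X → Set Y) (ybar : Y) (ρ : ℝ) (p : X × Y) : EReal :=
  ⨅ (xs : X →L[ℝ] ℝ)
    (_ : ∃ ws : Y →L[ℝ] ℝ, (∃ ys ∈ Jdual (p.2 - ybar), ‖ws - ys‖ ≤ ρ) ∧ xs ∈ coderiv F p ws),
    (‖xs‖ : EReal)

/-- `ξ_q(y) = ‖y - ybar‖^{1-q}/q`. -/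
def xiq (qq : ℝ) (ybar y : Y) : ℝ := ‖y - ybar‖ ^ (1 - qq) / qq

/-- The strict subdifferential q-slope `\overline{|∂F|}_q(xbar,ybar)`. -/
def ssdFq (F : X → Set Y) (xbar : X) (ybar : Y) (qq : ℝ) : EReal :=
  (qq : EReal) *
    ⨆ (ρ : ℝ) (_ : 0 < ρ),
      ⨅ (p : X × Y)
        (_ : p ∈ gph F ∧ ‖p.1 - xbar‖ < ρ ∧ ‖p.2 - ybar‖ < ρ ∧ p.1 ∉ Finv F ybar),
        ((‖p.2 - ybar‖ ^ (qq - 1) : ℝ) : EReal) * FsdSlope F ybar (xiq qq ybar p.2 * ρ) p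

/-- The modified strict subdifferential q-slope `\overline{|∂F|}^{+}_q(xbar,ybar)`. -/
def msdFq (F : X → Set Y) (xbar : X) (ybar : Y) (qq : ℝ) : EReal :=
  ⨆ (ρ : ℝ) (_ : 0 < ρ),
    ⨅ (p : X × Y)
      (_ : p ∈ gph F ∧ ‖p.1 - xbar‖ < ρ ∧ ‖p.2 - ybar‖ < ρ ∧ p.1 ∉ Finv F ybar),
      max (((qq * ‖p.2 - ybar‖ ^ (qq - 1) : ℝ) : EReal) * FsdSlope F ybar (xiq qq ybar p.2 * ρ) p)
        (equot ((‖p.2 - ybar‖ ^ qq : ℝ) : EReal) ‖p.1 - xbar‖)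

/-- The normalized ε-enlargement `J^q_ε(y)` of the q-duality mapping
`J^q(y) = q‖y‖^{q-1} J(y)`. -/
def JqEps (qq ε : ℝ) (y : Y) : Set (Y →L[ℝ] ℝ) :=
  {ws | ∃ us ∈ Jdual y, ∃ vs : Y →L[ℝ] ℝ, ‖vs‖ ≤ 1 ∧
    (qq * ‖y‖ ^ (qq - 1)) • us + ε • vs ≠ 0 ∧
    ws = ‖(qq * ‖y‖ ^ (qq - 1)) • us + ε • vs‖⁻¹ • ((qq * ‖y‖ ^ (qq - 1)) • us + ε • vs)}

/-- The constant `β` of Li and Mordukhovich. -/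
def betaLM (F : X → Set Y) (xbar : X) (ybar : Y) (qq : ℝ) : EReal :=
  ⨆ (ε : ℝ) (_ : 0 < ε),
    ⨅ (p : X × Y) (xs : X →L[ℝ] ℝ)
      (_ : p ∈ gph F ∧ p.1 ∉ Finv F ybar ∧ ‖p.1 - xbar‖ < ε ∧
           ‖p.2 - ybar‖ < min ε (‖p.1 - xbar‖ ^ (1 / 2 : ℝ)) ∧
           ∃ ws ∈ JqEps qq ε (p.2 - ybar), xs ∈ coderiv F p ws),
      ((qq * ‖xs‖ * ‖p.2 - ybar‖ ^ (qq - 1) : ℝ) : EReal)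

end NormedDefs

end HolderPaper

/-!
Sufficiency of (a) is Ekeland's variational principle. Let `γ` be below the uniform strict outer
slope and let `f(x, y) > 0` be small. Apply Ekeland's principle to `min(f₊, 1)` on a closed ball
around `(x̄, ȳ)`, perturbed by `γ d_ρ`, starting from `(x, y)`. The resulting point `u` is within
`f(x, y) / γ` of `(x, y)` in `d_ρ`. If `f₊(u) > 0`, the minimality of `u` says that its nonlocal
`ρ`-slope is at most `γ`, which is impossible. Hence `f₊(u) = 0`, so `u ∈ S(f) × {ȳ}` by (P1), and
`γ d(x, S(f)) ≤ f(x, y)`. Condition (P2) keeps the `y`-components inside the ball while `f` is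
small.

Conversely, an error bound with constant `τ` provides `x' ∈ S(f)` with `d(x, x') < 2 f(x, y) / τ`,
and `(x', ȳ)` shows that the nonlocal slope at `(x, y)` is at least `τ / 2`.

Conditions (b) and (c) each imply (d), and (d) implies (a). A nonlocal slope `≤ c` bounds the
local slope by `c`. Comparing `(x, y)` with `(x̄, ȳ)` and using (P2) also bounds `f(x, y) / d(x, x̄)`
by `c`.
-/

namespace HolderPaper

lemma equot_le_coe_iff {a : EReal} {d c : ℝ} (hd : 0 < d) :
    equot a d ≤ (c : EReal) ↔ a ≤ ((c * d : ℝ) : EReal) := by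
  unfold equot
  rw [if_neg hd.ne']
  induction a using EReal.rec with
  | bot =>
      rw [EReal.bot_mul_of_pos (by exact_mod_cast inv_pos.mpr hd)]
      simp
  | coe r =>
      rw [← EReal.coe_mul, EReal.coe_le_coe_iff, EReal.coe_le_coe_iff,
        ← div_eq_mul_inv, div_le_iff₀ hd]
  | top =>
      rw [EReal.top_mul_of_pos (by exact_mod_cast inv_pos.mpr hd)]
      simp [-EReal.coe_mul]

lemma coe_le_equot_iff {a : EReal} {d c : ℝ} (hd : 0 < d) :
    (c : EReal) ≤ equot a d ↔ ((c * d : ℝ) : EReal) ≤ a := by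
  unfold equot
  rw [if_neg hd.ne']
  induction a using EReal.rec with
  | bot =>
      rw [EReal.bot_mul_of_pos (by exact_mod_cast inv_pos.mpr hd)]
      simp [-EReal.coe_mul]
  | coe r =>
      rw [← EReal.coe_mul, EReal.coe_le_coe_iff, EReal.coe_le_coe_iff,
        ← div_eq_mul_inv, le_div_iff₀ hd]
  | top =>
      rw [EReal.top_mul_of_pos (by exact_mod_cast inv_pos.mpr hd)]
      simp

lemma coe_lt_equot_iff {a : EReal} {d c : ℝ} (hd : 0 < d) :
    (c : EReal) < equot a d ↔ ((c * d : ℝ) : EReal) < a := by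
  rw [lt_iff_not_ge, lt_iff_not_ge, equot_le_coe_iff hd]

lemma equot_anti {a : EReal} {d d' : ℝ} (ha : 0 ≤ a) (hd : 0 < d) (hdd' : d ≤ d') :
    equot a d' ≤ equot a d := by
  unfold equot
  rw [if_neg hd.ne', if_neg (hd.trans_le hdd').ne']
  exact mul_le_mul_of_nonneg_left (by exact_mod_cast inv_anti₀ hd hdd') ha

lemma exists_pos_coe_eq {a : EReal} (h0 : 0 < a) (ha : a ≠ ⊤) : ∃ r : ℝ, 0 < r ∧ a = r := by
  lift a to ℝ using ⟨ha, ne_bot_of_gt h0⟩ with r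
  exact ⟨r, by exact_mod_cast h0, rfl⟩

lemma exists_forall_of_eventually_comap_nhdsGT {α : Type*} {f : α → EReal} {P : α → Prop}
    (h : ∀ᶠ p in (𝓝[>] (0 : EReal)).comap f, P p) :
    ∃ ε : ℝ, 0 < ε ∧ ∀ p, 0 < f p → f p < ε → P p := by
  obtain ⟨s, hs, hsP⟩ := mem_comap.mp h
  obtain ⟨u, hu, hIoo⟩ := (mem_nhdsGT_iff_exists_Ioo_subset' (EReal.zero_lt_top)).mp hs
  obtain ⟨ε, hε, hεu⟩ := EReal.exists_between_coe_real hu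
  exact ⟨ε, by exact_mod_cast hε, fun p h0 h1 => hsP (hIoo ⟨h0, h1.trans hεu⟩)⟩

section SupInf

variable {ι : Type*} {G : ℝ → ι → EReal} {R : ℝ → ι → Prop}

lemma exists_forall_lt_of_pos_iSup_iInf
    (hG : ∀ ⦃ρ ρ'⦄ p, 0 < ρ → ρ ≤ ρ' → G ρ' p ≤ G ρ p)
    (hR : ∀ ⦃ρ ρ'⦄ p, ρ ≤ ρ' → R ρ p → R ρ' p)
    (h : 0 < ⨆ (ρ : ℝ) (_ : 0 < ρ), ⨅ (p : ι) (_ : R ρ p), G ρ p) :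
    ∃ γ : ℝ, 0 < γ ∧ ∃ ρ₀ : ℝ, 0 < ρ₀ ∧
      ∀ ρ, 0 < ρ → ρ ≤ ρ₀ → ∀ p, R ρ p → (γ : EReal) < G ρ p := by
  obtain ⟨ρ₀, hρ₀, hlt⟩ := lt_biSup_iff.mp h
  obtain ⟨γ, hγ, hγlt⟩ := EReal.exists_between_coe_real hlt
  refine ⟨γ, by exact_mod_cast hγ, ρ₀, hρ₀, fun ρ hρ hρρ₀ p hp => ?_⟩
  exact (hγlt.trans_le (iInf₂_le p (hR p hρρ₀ hp))).trans_le (hG p hρ hρρ₀)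

lemma pos_iSup_iInf_of_forall_le {c ρ : ℝ} (hc : 0 < c) (hρ : 0 < ρ)
    (h : ∀ p, R ρ p → (c : EReal) ≤ G ρ p) :
    0 < ⨆ (ρ : ℝ) (_ : 0 < ρ), ⨅ (p : ι) (_ : R ρ p), G ρ p :=
  lt_of_lt_of_le (by exact_mod_cast hc)
    ((le_iInf₂ h).trans (le_iSup₂ (f := fun ρ (_ : 0 < ρ) => ⨅ (p : ι) (_ : R ρ p), G ρ p) ρ hρ))

end SupInf

section Ekeland

variable {α : Type*} {V : Set α} {g : α → ℝ} {D : α → α → ℝ}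

lemma exists_almost_min_ekeland (hg : BddBelow (g '' V)) (hD : ∀ a, D a a = 0) {u : α}
    (hu : u ∈ V) {ε : ℝ} (hε : 0 < ε) :
    ∃ w ∈ V, g w + D u w ≤ g u ∧ ∀ z ∈ V, g z + D u z ≤ g u → g w ≤ g z + ε := by
  set A := g '' {z ∈ V | g z + D u z ≤ g u}
  have hA : A.Nonempty := ⟨g u, u, ⟨hu, by rw [hD, add_zero]⟩, rfl⟩
  have hAbdd : BddBelow A := hg.mono (image_mono fun z hz => hz.1)
  obtain ⟨_, ⟨w, ⟨hwV, hw⟩, rfl⟩, hlt⟩ := Real.lt_sInf_add_pos hA hε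
  refine ⟨w, hwV, hw, fun z hzV hz => ?_⟩
  linarith [csInf_le hAbdd ⟨z, ⟨hzV, hz⟩, rfl⟩]

lemma ekeland_chain (hD : ∀ a, D a a = 0) (htri : ∀ a b c, D a c ≤ D a b + D b c) {u : ℕ → α}
    (hstep : ∀ n, g (u (n + 1)) + D (u n) (u (n + 1)) ≤ g (u n)) {n m : ℕ} (hnm : n ≤ m) :
    g (u m) + D (u n) (u m) ≤ g (u n) := by
  induction m, hnm using Nat.le_induction with
  | base => rw [hD, add_zero]
  | succ m _ ih => linarith [hstep m, htri (u n) (u m) (u (m + 1))]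

lemma cauchySeq_of_ekeland_chain [MetricSpace α] {κ : ℝ} (hκ : 0 < κ)
    (hDd : ∀ a b, κ * dist a b ≤ D a b) {u : ℕ → α} (hbdd : BddBelow (range (g ∘ u)))
    (hchain : ∀ n m, n ≤ m → g (u m) + D (u n) (u m) ≤ g (u n)) : CauchySeq u := by
  rw [Metric.cauchySeq_iff']
  intro ε hε
  obtain ⟨N, hN⟩ := exists_lt_of_ciInf_lt (lt_add_of_pos_right (⨅ n, g (u n)) (mul_pos hκ hε))
  refine ⟨N, fun n hn => ?_⟩
  have hle : ⨅ n, g (u n) ≤ g (u n) := ciInf_le hbdd n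
  have := hchain N n hn
  have := hDd (u N) (u n)
  rw [dist_comm]
  nlinarith

lemma le_of_tendsto_of_lowerSemicontinuousOn [TopologicalSpace α] {β : Type*} [LinearOrder β]
    {h : α → β} (hV : IsClosed V) (hh : LowerSemicontinuousOn h V) {u : ℕ → α}
    (hu : ∀ n, u n ∈ V) {y : α} (hy : Tendsto u atTop (𝓝 y)) {c : β}
    (hc : ∀ᶠ n in atTop, h (u n) ≤ c) : h y ≤ c := by
  by_contra! hlt
  have hev := (tendsto_nhdsWithin_iff.mpr ⟨hy, Eventually.of_forall hu⟩).eventually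
    (hh y (hV.mem_of_tendsto hy (Eventually.of_forall hu)) c hlt)
  obtain ⟨n, hn1, hn2⟩ := (hev.and hc).exists
  exact hn2.not_gt hn1

theorem exists_ekeland_point [MetricSpace α] [CompleteSpace α] (hV : IsClosed V)
    (hg : BddBelow (g '' V)) (hlsc : LowerSemicontinuousOn g V) (hD : ∀ a, D a a = 0)
    (htri : ∀ a b c, D a c ≤ D a b + D b c) {κ : ℝ} (hκ : 0 < κ)
    (hDd : ∀ a b, κ * dist a b ≤ D a b) (hDc : ∀ a, Continuous (D a)) {x₀ : α}
    (hx₀ : x₀ ∈ V) :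
    ∃ y ∈ V, g y + D x₀ y ≤ g x₀ ∧ ∀ z ∈ V, g y ≤ g z + D y z := by
  have hD0 : ∀ a b, 0 ≤ D a b := fun a b => (mul_nonneg hκ.le dist_nonneg).trans (hDd a b)
  -- `u (n + 1)` minimises `g`, up to `2⁻ⁿ`, over `{z ∈ V | g z + D (u n) z ≤ g (u n)}`
  choose! next hnextV hnext hnext_min using fun (n : ℕ) (u : α) (hu : u ∈ V) =>
    exists_almost_min_ekeland hg hD hu (pow_pos (one_half_pos (α := ℝ)) n)
  let u : ℕ → α := fun n => Nat.rec x₀ next n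
  have hu : ∀ n, u n ∈ V := fun n => Nat.rec hx₀ (fun k ih => hnextV k _ ih) n
  have hchain := fun n m (h : n ≤ m) =>
    ekeland_chain (u := u) hD htri (fun n => hnext n _ (hu n)) h
  have hbdd : BddBelow (range (g ∘ u)) :=
    hg.mono (range_subset_iff.mpr fun n => mem_image_of_mem g (hu n))
  obtain ⟨y, hy⟩ := cauchySeq_tendsto_of_complete (cauchySeq_of_ekeland_chain hκ hDd hbdd hchain)
  have hyS : ∀ n, g y + D (u n) y ≤ g (u n) := fun n =>
    le_of_tendsto_of_lowerSemicontinuousOn (h := fun z => g z + D (u n) z) hV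
      (hlsc.add (hDc _).continuousOn.lowerSemicontinuousOn) hu hy
      ((eventually_ge_atTop n).mono (hchain n))
  refine ⟨y, hV.mem_of_tendsto hy (Eventually.of_forall hu), hyS 0, fun z hzV => ?_⟩
  by_contra! hz
  have hclose : ∀ n : ℕ, g y ≤ g z + (1 / 2 : ℝ) ^ n := fun n => by
    have hzS : g z + D (u n) z ≤ g (u n) := by linarith [htri (u n) y z, hyS n]
    linarith [hyS (n + 1), hD0 (u (n + 1)) y, hnext_min n (u n) (hu n) z hzV hzS]
  have hyz : g y ≤ g z := le_of_forall_pos_le_add fun ε hε => by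
    obtain ⟨n, hn⟩ := exists_pow_lt_of_lt_one hε (one_half_lt_one (α := ℝ))
    linarith [hclose n]
  linarith [hD0 y z]

end Ekeland

section Metric

variable {X Y : Type*} [MetricSpace X] [MetricSpace Y]

lemma drho_self (ρ : ℝ) (p : X × Y) : drho ρ p p = 0 := by
  simp [drho]

lemma drho_comm (ρ : ℝ) (p q : X × Y) : drho ρ p q = drho ρ q p := by
  simp [drho, dist_comm]

lemma drho_nonneg (ρ : ℝ) (p q : X × Y) : 0 ≤ drho ρ p q :=
  dist_nonneg.trans (le_max_left _ _)

lemma dist_fst_le_drho (ρ : ℝ) (p q : X × Y) : dist p.1 q.1 ≤ drho ρ p q :=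
  le_max_left _ _

lemma drho_triangle {ρ : ℝ} (hρ : 0 ≤ ρ) (a b c : X × Y) :
    drho ρ a c ≤ drho ρ a b + drho ρ b c := by
  refine max_le ((dist_triangle _ _ _).trans (add_le_add (le_max_left _ _) (le_max_left _ _))) ?_
  calc ρ * dist a.2 c.2 ≤ ρ * dist a.2 b.2 + ρ * dist b.2 c.2 := by
        rw [← mul_add]; exact mul_le_mul_of_nonneg_left (dist_triangle _ _ _) hρ
    _ ≤ drho ρ a b + drho ρ b c := add_le_add (le_max_right _ _) (le_max_right _ _)

lemma mul_dist_le_drho {ρ : ℝ} (hρ0 : 0 ≤ ρ) (hρ1 : ρ ≤ 1) (p q : X × Y) :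
    ρ * dist p q ≤ drho ρ p q := by
  rw [Prod.dist_eq, mul_max_of_nonneg _ _ hρ0]
  exact max_le_max (mul_le_of_le_one_left dist_nonneg hρ1) le_rfl

lemma drho_pos {ρ : ℝ} (hρ : 0 < ρ) {p q : X × Y} (h : p ≠ q) : 0 < drho ρ p q := by
  rcases Prod.ext_iff.not.mp h |> not_and_or.mp with h1 | h2
  · exact (dist_pos.mpr h1).trans_le (le_max_left _ _)
  · exact (mul_pos hρ (dist_pos.mpr h2)).trans_le (le_max_right _ _)

lemma drho_mono {ρ ρ' : ℝ} (h : ρ ≤ ρ') (p q : X × Y) : drho ρ p q ≤ drho ρ' p q :=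
  max_le_max le_rfl (mul_le_mul_of_nonneg_right h dist_nonneg)

lemma continuous_drho (ρ : ℝ) (p : X × Y) : Continuous (drho ρ p) :=
  (continuous_const.dist continuous_fst).max
    (continuous_const.mul (continuous_const.dist continuous_snd))

end Metric

section Level

variable {X Y : Type*} {f : X × Y → EReal} {xbar : X} {ybar : Y}

lemma fplus_nonneg (f : X × Y → EReal) (p : X × Y) : 0 ≤ fplus f p := le_max_right _ _

lemma fplus_of_nonneg {p : X × Y} (h : 0 ≤ f p) : fplus f p = f p := max_eq_left h

lemma fplus_eq_zero_iff {p : X × Y} : fplus f p = 0 ↔ f p ≤ 0 := max_eq_right_iff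

lemma P1.mem_Sf (hP1 : P1 f ybar) {p : X × Y} (hp : f p ≤ 0) : p.1 ∈ Sf f ybar := by
  have hy : p.2 = ybar := by_contra fun hne => (hP1 p hne).not_ge hp
  simpa [Sf, ← hy] using hp

lemma hasErrorBound_of_forall_mul_infDist_le [MetricSpace X] (h0 : f (xbar, ybar) = 0)
    (hP1 : P1 f ybar) {δ ε κ : ℝ} (hδ : 0 < δ) (hε : 0 < ε)
    (h : ∀ p : X × Y, dist p.1 xbar < δ → 0 < f p → f p < ε →
      ((κ * infDist p.1 (Sf f ybar) : ℝ) : EReal) ≤ f p) :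
    hasErrorBound f xbar ybar (min κ (ε / δ)) := by
  refine ⟨ball xbar δ, ball_mem_nhds xbar hδ, fun x hx y => ?_⟩
  rw [mem_ball] at hx
  rcases le_or_gt (f (x, y)) 0 with hneg | hpos
  · rw [infDist_zero_of_mem (hP1.mem_Sf hneg), mul_zero, EReal.coe_zero]
    exact fplus_nonneg f _
  have hinf : 0 ≤ infDist x (Sf f ybar) := infDist_nonneg
  refine le_trans ?_ (le_max_left (f (x, y)) 0)
  rcases lt_or_ge (f (x, y)) ε with hlt | hge
  · refine le_trans ?_ (h (x, y) hx hpos hlt)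
    exact_mod_cast mul_le_mul_of_nonneg_right (min_le_left _ _) hinf
  · refine le_trans ?_ hge
    have hxS : infDist x (Sf f ybar) ≤ δ :=
      (infDist_le_dist_of_mem (show xbar ∈ Sf f ybar from h0.le)).trans hx.le
    have hτ : min κ (ε / δ) * infDist x (Sf f ybar) ≤ ε :=
      calc min κ (ε / δ) * infDist x (Sf f ybar) ≤ ε / δ * δ :=
            mul_le_mul (min_le_right _ _) hxS hinf (by positivity)
        _ = ε := div_mul_cancel₀ _ hδ.ne'
    exact_mod_cast hτ

lemma slope_region_mono [MetricSpace X] {ρ ρ' : ℝ} {p : X × Y} (h : ρ ≤ ρ')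
    (hp : dist p.1 xbar < ρ ∧ 0 < f p ∧ f p < ρ) :
    dist p.1 xbar < ρ' ∧ 0 < f p ∧ f p < ρ' :=
  ⟨hp.1.trans_le h, hp.2.1, hp.2.2.trans_le (EReal.coe_le_coe_iff.mpr h)⟩

lemma P2.exists_mul_dist_lt [MetricSpace Y] (hP2 : P2 f ybar) :
    ∃ c : ℝ, 0 < c ∧ ∃ ε : ℝ, 0 < ε ∧
      ∀ p : X × Y, 0 < f p → f p < ε → ((c * dist p.2 ybar : ℝ) : EReal) < f p := by
  obtain ⟨c, hc0, hc⟩ := EReal.exists_between_coe_real hP2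
  obtain ⟨ε, hε, hεP⟩ := exists_forall_of_eventually_comap_nhdsGT (eventually_lt_of_lt_liminf hc)
  refine ⟨c, by exact_mod_cast hc0, ε, hε, fun p h0 h1 => ?_⟩
  rcases (dist_nonneg (x := p.2) (y := ybar)).eq_or_lt with hd | hd
  · rwa [← hd, mul_zero, EReal.coe_zero]
  · exact (coe_lt_equot_iff hd).mp (hεP p h0 h1)

end Level

section Trunc

variable {X Y : Type*} {f : X × Y → EReal} {p : X × Y}

/-- Truncating `f₊` at `1` makes it real-valued, as Ekeland's principle requires. -/
def fplusTrunc (f : X × Y → EReal) (p : X × Y) : ℝ := (min (fplus f p) 1).toReal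

lemma coe_fplusTrunc (p : X × Y) : (fplusTrunc f p : EReal) = min (fplus f p) 1 :=
  EReal.coe_toReal ((min_le_right _ _).trans_lt (EReal.coe_lt_top 1)).ne
    (ne_bot_of_gt (EReal.bot_lt_zero.trans_le (le_min (fplus_nonneg f p) zero_le_one)))

lemma fplusTrunc_nonneg (p : X × Y) : 0 ≤ fplusTrunc f p := by
  have : (0 : EReal) ≤ fplusTrunc f p := by
    rw [coe_fplusTrunc]; exact le_min (fplus_nonneg f p) zero_le_one
  exact_mod_cast this

lemma coe_fplusTrunc_le (p : X × Y) : (fplusTrunc f p : EReal) ≤ fplus f p := by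
  rw [coe_fplusTrunc]; exact min_le_left _ _

lemma fplusTrunc_eq {r : ℝ} (hfp : f p = r) (hr0 : 0 ≤ r) (hr1 : r ≤ 1) : fplusTrunc f p = r := by
  have : (fplusTrunc f p : EReal) = r := by
    rw [coe_fplusTrunc, fplus_of_nonneg (by rw [hfp]; exact_mod_cast hr0), hfp,
      min_eq_left (by exact_mod_cast hr1)]
  exact_mod_cast this

lemma nonpos_of_fplusTrunc_eq_zero (h : fplusTrunc f p = 0) : f p ≤ 0 := by
  have hmin : min (fplus f p) 1 = 0 := by rw [← coe_fplusTrunc, h, EReal.coe_zero]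
  rcases min_eq_iff.mp hmin with ⟨h1, -⟩ | ⟨h1, -⟩
  · exact fplus_eq_zero_iff.mp h1
  · exact absurd h1 one_ne_zero

lemma eq_fplusTrunc_of_pos_of_lt_one (h0 : 0 < fplusTrunc f p) (h1 : fplusTrunc f p < 1) :
    f p = fplusTrunc f p := by
  have hmin : min (fplus f p) 1 = fplusTrunc f p := (coe_fplusTrunc p).symm
  have hfplus : fplus f p = fplusTrunc f p := by
    rcases min_eq_iff.mp hmin with ⟨h, -⟩ | ⟨h, -⟩
    · exact h
    · exact absurd (EReal.coe_injective h).symm h1.ne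
  have hnn : 0 ≤ f p := by
    by_contra! hneg
    rw [fplus_eq_zero_iff.mpr hneg.le] at hfplus
    exact h0.ne (EReal.coe_injective hfplus.symm).symm
  rw [← hfplus, fplus_of_nonneg hnn]

lemma lowerSemicontinuousOn_fplusTrunc [TopologicalSpace (X × Y)] {V : Set (X × Y)}
    (h : LowerSemicontinuousOn (fplus f) V) : LowerSemicontinuousOn (fplusTrunc f) V := by
  intro p hp c hc
  have hmin : LowerSemicontinuousOn (fun q => min (fplus f q) 1) V :=
    h.inf lowerSemicontinuousOn_const
  filter_upwards [hmin p hp c (show (c : EReal) < min (fplus f p) 1 by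
    rw [← coe_fplusTrunc]; exact_mod_cast hc)] with q hq
  rw [← coe_fplusTrunc] at hq
  exact_mod_cast hq

end Trunc

section Slopes

variable {X Y : Type*} [MetricSpace X] [MetricSpace Y] {f : X × Y → EReal} {xbar : X} {ybar : Y}
  {ρ : ℝ} {p : X × Y}

lemma equot_le_nslope (hp : f p ≠ ⊤) {q : X × Y} (hq : q ≠ p) :
    equot (max (f p - fplus f q) 0) (drho ρ p q) ≤ nslope f ρ p := by
  rw [nslope, if_neg hp]
  exact le_iSup₂_of_le q hq le_rfl

lemma nslope_le_iff (hρ : 0 < ρ) (hp : f p ≠ ⊤) {c : ℝ} (hc : 0 ≤ c) :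
    nslope f ρ p ≤ c ↔ ∀ q, q ≠ p → f p - fplus f q ≤ ((c * drho ρ p q : ℝ) : EReal) := by
  rw [nslope, if_neg hp, iSup₂_le_iff]
  refine forall₂_congr fun q hq => ?_
  rw [equot_le_coe_iff (drho_pos hρ hq.symm), max_le_iff, and_iff_left_iff_imp]
  exact fun _ => by exact_mod_cast mul_nonneg hc (drho_nonneg ρ p q)

lemma ne_top_of_nslope_le {c : ℝ} (h : nslope f ρ p ≤ c) : f p ≠ ⊤ := by
  intro hp
  rw [nslope, if_pos hp, top_le_iff] at h
  exact EReal.coe_ne_top c h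

lemma nslope_anti {ρ' : ℝ} (hρ : 0 < ρ) (hρρ' : ρ ≤ ρ') : nslope f ρ' p ≤ nslope f ρ p := by
  unfold nslope
  split_ifs
  · exact le_rfl
  · exact iSup₂_mono fun q hq =>
      equot_anti (le_max_right _ _) (drho_pos hρ hq.symm) (drho_mono hρρ' p q)

lemma lslope_anti {ρ' : ℝ} (hρ : 0 < ρ) (hρρ' : ρ ≤ ρ') : lslope f ρ' p ≤ lslope f ρ p :=
  limsup_le_limsup (eventually_nhdsWithin_of_forall fun q hq =>
    equot_anti (le_max_right _ _) (drho_pos hρ hq) (drho_mono hρρ' q p))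

lemma lslope_le_of_nslope_le (hρ : 0 < ρ) {c : ℝ} (hc : 0 ≤ c) (hfp : 0 < f p)
    (h : nslope f ρ p ≤ c) : lslope f ρ p ≤ c := by
  have hst := (nslope_le_iff hρ (ne_top_of_nslope_le h) hc).mp h
  have hsmall : ∀ᶠ q in 𝓝 p, ((c * drho ρ p q : ℝ) : EReal) < f p := by
    have hlim : Tendsto (fun q => c * drho ρ p q) (𝓝 p) (𝓝 0) := by
      simpa [drho_self] using ((continuous_drho ρ p).const_mul c).tendsto p
    exact ((continuous_coe_real_ereal.tendsto 0).comp hlim).eventually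
      (eventually_lt_nhds (by rwa [EReal.coe_zero]))
  refine limsup_le_of_le (by isBoundedDefault) ?_
  filter_upwards [nhdsWithin_le_nhds hsmall, self_mem_nhdsWithin] with q hq hqp
  rw [equot_le_coe_iff (drho_pos hρ hqp), drho_comm, max_le_iff]
  have hfq : 0 ≤ f q := by
    by_contra! hneg
    have := hst q hqp
    rw [fplus_eq_zero_iff.mpr hneg.le, sub_zero] at this
    exact this.not_gt hq
  refine ⟨?_, by exact_mod_cast mul_nonneg hc (drho_nonneg ρ p q)⟩
  rw [← fplus_of_nonneg hfq]
  exact hst q hqp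

lemma equot_dist_fst_le_of_nslope_le (h0 : f (xbar, ybar) = 0) (hρ : 0 < ρ) {c c₂ : ℝ}
    (hc : 0 ≤ c) (hcρ : c * ρ ≤ c₂) (hfp : 0 < f p)
    (hP2 : ((c₂ * dist p.2 ybar : ℝ) : EReal) < f p) (h : nslope f ρ p ≤ c) :
    equot (f p) (dist p.1 xbar) ≤ c := by
  obtain ⟨r, hr, hfpr⟩ := exists_pos_coe_eq hfp (ne_top_of_nslope_le h)
  have hne : (xbar, ybar) ≠ p := fun he => (he ▸ hfp).ne' h0
  -- test the slope with the point `(xbar, ybar)`, where `f₊` vanishes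
  have htest := (nslope_le_iff hρ (ne_top_of_nslope_le h) hc).mp h _ hne
  rw [fplus_eq_zero_iff.mpr h0.le, sub_zero, hfpr] at htest
  have htest' : r ≤ c * max (dist p.1 xbar) (ρ * dist p.2 ybar) := by exact_mod_cast htest
  have hP2' : c₂ * dist p.2 ybar < r := by rw [hfpr] at hP2; exact_mod_cast hP2
  have hx : r ≤ c * dist p.1 xbar := by
    rcases le_total (ρ * dist p.2 ybar) (dist p.1 xbar) with hle | hle
    · rwa [max_eq_left hle] at htest'
    · rw [max_eq_right hle] at htest'
      nlinarith [mul_le_mul_of_nonneg_right hcρ (dist_nonneg (x := p.2) (y := ybar))]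
  have hd : 0 < dist p.1 xbar := by
    by_contra! hd
    nlinarith [dist_nonneg (x := p.1) (y := xbar)]
  rw [hfpr, equot_le_coe_iff hd]
  exact_mod_cast hx

lemma coe_le_nslope_of_fplus_eq_zero (hρ : 0 < ρ) {q : X × Y} (hq : q ≠ p)
    (hfq : fplus f q = 0) {r c : ℝ} (hfp : f p = r) (h : c * drho ρ p q ≤ r) :
    (c : EReal) ≤ nslope f ρ p := by
  refine le_trans ?_ (equot_le_nslope (hfp ▸ EReal.coe_ne_top r) hq)
  rw [coe_le_equot_iff (drho_pos hρ hq.symm), hfq, sub_zero, hfp]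
  exact le_max_of_le_left (by exact_mod_cast h)

lemma nslope_le_of_forall_fplusTrunc_le {κ R : ℝ} (hκ : 0 ≤ κ) (hρ : 0 < ρ) (hρ1 : ρ ≤ 1)
    {u c : X × Y} (hu : dist u c ≤ R) (hfu : f u = fplusTrunc f u)
    (hsmall : fplusTrunc f u ≤ κ * ρ * R)
    (hmin : ∀ z ∈ closedBall c (2 * R), fplusTrunc f u ≤ fplusTrunc f z + κ * drho ρ u z) :
    nslope f ρ u ≤ κ := by
  rw [nslope_le_iff hρ (by rw [hfu]; exact EReal.coe_ne_top _) hκ]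
  intro q _
  calc f u - fplus f q ≤ ((fplusTrunc f u - fplusTrunc f q : ℝ) : EReal) := by
        rw [EReal.coe_sub, ← hfu]; exact EReal.sub_le_sub le_rfl (coe_fplusTrunc_le q)
    _ ≤ ((κ * drho ρ u q : ℝ) : EReal) := by
        refine EReal.coe_le_coe_iff.mpr ?_
        by_cases hqV : q ∈ closedBall c (2 * R)
        · linarith [hmin q hqV]
        · have hfar : R ≤ dist u q := by
            rw [mem_closedBall, not_le] at hqV
            linarith [dist_triangle q u c, dist_comm q u]
          calc fplusTrunc f u - fplusTrunc f q ≤ κ * ρ * R := by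
                linarith [fplusTrunc_nonneg (f := f) q]
            _ ≤ κ * (ρ * dist u q) := by rw [mul_assoc]; gcongr
            _ ≤ κ * drho ρ u q := by gcongr; exact mul_dist_le_drho hρ.le hρ1 u q

lemma mul_infDist_Sf_le_of_forall_lt_nslope [CompleteSpace X] [CompleteSpace Y]
    (hP1 : P1 f ybar) (hlsc : LowerSemicontinuousOn (fplus f) (closedBall (xbar, ybar) (2 * ρ)))
    {γ r : ℝ} (hγ : 0 < γ) (hρ : 0 < ρ) (hρ2 : 2 * ρ ≤ 1)
    (hslope : ∀ u : X × Y, dist u.1 xbar < ρ → 0 < f u → f u < ρ → (γ : EReal) < nslope f ρ u)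
    (hnear : ∀ u : X × Y, 0 < f u → f u ≤ r → dist u.2 ybar ≤ ρ)
    (hp : dist p.1 xbar < ρ / 2) (hfp : f p = r) (hr : 0 < r) (hrρ : r < ρ)
    (hrγ : r ≤ γ * ρ ^ 2) :
    γ * infDist p.1 (Sf f ybar) ≤ r := by
  have hpV : p ∈ closedBall (xbar, ybar) (2 * ρ) := by
    rw [mem_closedBall, Prod.dist_eq]
    exact max_le (by linarith)
      ((hnear p (by rw [hfp]; exact_mod_cast hr) hfp.le).trans (by linarith))
  obtain ⟨u, -, hpu, hmin⟩ := exists_ekeland_point (D := fun a b => γ * drho ρ a b)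
    isClosed_closedBall ⟨0, by rintro _ ⟨q, -, rfl⟩; exact fplusTrunc_nonneg (f := f) q⟩
    (lowerSemicontinuousOn_fplusTrunc hlsc)
    (fun a => by simp [drho_self])
    (fun a b c => by nlinarith [drho_triangle hρ.le a b c]) (mul_pos hγ hρ)
    (fun a b => by nlinarith [mul_dist_le_drho hρ.le (by linarith) a b])
    (fun a => (continuous_drho ρ a).const_mul γ) hpV
  rw [fplusTrunc_eq hfp hr.le (by linarith)] at hpu
  have hpu1 : γ * dist p.1 u.1 ≤ r := by
    nlinarith [fplusTrunc_nonneg (f := f) u, dist_fst_le_drho ρ p u]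
  rcases (fplusTrunc_nonneg u).eq_or_lt with hu0 | hu0
  · -- the Ekeland point lies in `S(f) × {ybar}`
    have hS := hP1.mem_Sf (nonpos_of_fplusTrunc_eq_zero hu0.symm)
    exact (mul_le_mul_of_nonneg_left (infDist_le_dist_of_mem hS) hγ.le).trans hpu1
  · -- otherwise its nonlocal slope is at most `γ`, contradicting `hslope`
    exfalso
    have hur : fplusTrunc f u ≤ r := by nlinarith [drho_nonneg ρ p u]
    have hfu := eq_fplusTrunc_of_pos_of_lt_one hu0 (by linarith)
    have hfu0 : 0 < f u := by rw [hfu]; exact_mod_cast hu0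
    have hpu2 : dist p.1 u.1 ≤ ρ ^ 2 := le_of_mul_le_mul_left (by linarith) hγ
    have hu1 : dist u.1 xbar < ρ := by
      nlinarith [dist_triangle u.1 p.1 xbar, dist_comm u.1 p.1]
    have hu2 : dist u.2 ybar ≤ ρ := hnear u hfu0 (by rw [hfu]; exact_mod_cast hur)
    have hle := nslope_le_of_forall_fplusTrunc_le hγ.le hρ (by linarith) (c := (xbar, ybar))
      (by rw [Prod.dist_eq]; exact max_le hu1.le hu2) hfu (by nlinarith) hmin
    exact (hslope u hu1 hfu0 (by rw [hfu]; exact_mod_cast hur.trans_lt hrρ)).not_ge hle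

end Slopes

section Criteria

variable {X Y : Type*} [MetricSpace X] [MetricSpace Y] {f : X × Y → EReal} {xbar : X} {ybar : Y}

theorem exists_hasErrorBound_of_uss_pos [CompleteSpace X] [CompleteSpace Y]
    (h0 : f (xbar, ybar) = 0) (hP1 : P1 f ybar) (hP2 : P2 f ybar)
    (hlsc : ∃ U ∈ 𝓝 (xbar, ybar), LowerSemicontinuousOn (fplus f) U)
    (ha : 0 < uss f xbar ybar) :
    ∃ τ : ℝ, 0 < τ ∧ hasErrorBound f xbar ybar τ := by
  obtain ⟨γ, hγ, ρ₀, hρ₀, hslope⟩ := exists_forall_lt_of_pos_iSup_iInf (G := nslope f)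
    (R := fun ρ p => dist p.1 xbar < ρ ∧ 0 < f p ∧ f p < ρ)
    (fun _ _ _ hρ hρρ' => nslope_anti hρ hρρ') (fun _ _ _ => slope_region_mono) ha
  obtain ⟨U, hU, hlscU⟩ := hlsc
  obtain ⟨ε₀, hε₀, hball⟩ := nhds_basis_closedBall.mem_iff.mp hU
  obtain ⟨c₂, hc₂, ε₂, hε₂, hP2'⟩ := hP2.exists_mul_dist_lt
  set ρ := min (min ρ₀ (ε₀ / 2)) (1 / 2)
  have hρ : 0 < ρ := by positivity
  have hρρ₀ : ρ ≤ ρ₀ := (min_le_left _ _).trans (min_le_left _ _)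
  have hρε₀ : ρ ≤ ε₀ / 2 := (min_le_left _ _).trans (min_le_right _ _)
  have hρ1 : ρ ≤ 1 / 2 := min_le_right _ _
  set ε := min (min ε₂ ρ) (min (c₂ * ρ) (γ * ρ ^ 2))
  have hε : 0 < ε := by positivity
  refine ⟨_, lt_min hγ (div_pos hε (half_pos hρ)),
    hasErrorBound_of_forall_mul_infDist_le h0 hP1 (half_pos hρ) hε fun p hp hfp0 hfpε => ?_⟩
  obtain ⟨r, hr, hfp⟩ := exists_pos_coe_eq hfp0 hfpε.ne_top
  have hrε : r < ε := by rw [hfp] at hfpε; exact_mod_cast hfpε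
  have hrε₂ : r < ε₂ := hrε.trans_le ((min_le_left _ _).trans (min_le_left _ _))
  have hrc₂ : r ≤ c₂ * ρ := hrε.le.trans ((min_le_right _ _).trans (min_le_left _ _))
  have hnear : ∀ u : X × Y, 0 < f u → f u ≤ r → dist u.2 ybar ≤ ρ := fun u hu0 hur => by
    have hlt : ((c₂ * dist u.2 ybar : ℝ) : EReal) < c₂ * ρ :=
      (hP2' u hu0 (hur.trans_lt (EReal.coe_lt_coe_iff.mpr hrε₂))).trans_le
        (hur.trans (EReal.coe_le_coe_iff.mpr hrc₂))
    exact (lt_of_mul_lt_mul_left (EReal.coe_lt_coe_iff.mp hlt) hc₂.le).le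
  rw [hfp]
  refine EReal.coe_le_coe_iff.mpr (mul_infDist_Sf_le_of_forall_lt_nslope hP1
    (hlscU.mono ((closedBall_subset_closedBall (by linarith)).trans hball)) hγ hρ (by linarith)
    (fun u h1 h2 h3 => hslope ρ hρ hρρ₀ u ⟨h1, h2, h3⟩) hnear hp hfp hr ?_ ?_)
  · exact hrε.trans_le ((min_le_left _ _).trans (min_le_right _ _))
  · exact hrε.le.trans ((min_le_right _ _).trans (min_le_right _ _))

theorem uss_pos_of_hasErrorBound (h0 : f (xbar, ybar) = 0) (hP2 : P2 f ybar) {τ : ℝ}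
    (hτ : 0 < τ) (hEB : hasErrorBound f xbar ybar τ) : 0 < uss f xbar ybar := by
  obtain ⟨U, hU, hEB⟩ := hEB
  obtain ⟨δ, hδ, hball⟩ := Metric.mem_nhds_iff.mp hU
  obtain ⟨c₂, hc₂, ε₂, hε₂, hP2'⟩ := hP2.exists_mul_dist_lt
  have hc : 0 < τ / 2 := half_pos hτ
  set ρ := min δ (min ε₂ (c₂ / (τ / 2)))
  have hρ : 0 < ρ := by positivity
  have hρε₂ : ρ ≤ ε₂ := (min_le_right _ _).trans (min_le_left _ _)
  have hcρ : τ / 2 * ρ ≤ c₂ := (le_div_iff₀' hc).mp ((min_le_right _ _).trans (min_le_right _ _))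
  refine pos_iSup_iInf_of_forall_le hc hρ fun p ⟨h1, h2, h3⟩ => ?_
  obtain ⟨r, hr, hfp⟩ := exists_pos_coe_eq h2 h3.ne_top
  have hbound : τ * infDist p.1 (Sf f ybar) ≤ r := by
    have := hEB p.1 (hball (mem_ball.mpr (h1.trans_le (min_le_left _ _)))) p.2
    rwa [Prod.mk.eta, fplus_of_nonneg h2.le, hfp, EReal.coe_le_coe_iff] at this
  have hP2p : c₂ * dist p.2 ybar < r := by
    have := hP2' p h2 (h3.trans_le (EReal.coe_le_coe_iff.mpr hρε₂))
    rwa [hfp, EReal.coe_lt_coe_iff] at this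
  -- a point `x'` of `S(f)` with `d(p.1, x') < 2 r / τ` witnesses the slope bound
  obtain ⟨x', hx'S, hx'⟩ := (infDist_lt_iff ⟨xbar, h0.le⟩).mp
    (show infDist p.1 (Sf f ybar) < r / (τ / 2) by
      rw [lt_div_iff₀ hc]; nlinarith [infDist_nonneg (x := p.1) (s := Sf f ybar)])
  have hq : (x', ybar) ≠ p := fun h => (h ▸ h2).not_ge hx'S
  refine coe_le_nslope_of_fplus_eq_zero hρ hq (fplus_eq_zero_iff.mpr hx'S) hfp ?_
  rw [drho, mul_max_of_nonneg _ _ hc.le]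
  refine max_le ?_ ?_
  · rw [lt_div_iff₀ hc] at hx'; linarith
  · nlinarith [mul_le_mul_of_nonneg_right hcρ (dist_nonneg (x := p.2) (y := ybar))]

theorem msos_pos_of_sos_pos (h : 0 < sos f xbar ybar) : 0 < msos f xbar ybar :=
  h.trans_le (iSup₂_mono fun _ _ => iInf₂_mono fun _ _ => le_max_left _ _)

theorem msos_pos_of_liminf_pos
    (hb : 0 < liminf (fun p : X × Y => equot (f p) (dist p.1 xbar))
      ((𝓝 xbar).comap Prod.fst ⊓ (𝓝[>] (0 : EReal)).comap f)) :
    0 < msos f xbar ybar := by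
  obtain ⟨c, hc0, hc⟩ := EReal.exists_between_coe_real hb
  obtain ⟨s, hs, t, ht, hst⟩ := eventually_inf.mp (eventually_lt_of_lt_liminf hc)
  obtain ⟨δ, hδ, hδs⟩ := (nhds_basis_ball.comap Prod.fst).mem_iff.mp hs
  obtain ⟨ε, hε, hεt⟩ := exists_forall_of_eventually_comap_nhdsGT (P := (· ∈ t)) ht
  refine pos_iSup_iInf_of_forall_le (c := c) (by exact_mod_cast hc0) (lt_min hδ hε)
    fun p ⟨h1, h2, h3⟩ => le_max_of_le_right (hst p ⟨hδs ?_, hεt p h2 (h3.trans_le ?_)⟩).le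
  · exact mem_ball.mpr (h1.trans_le (min_le_left _ _))
  · exact_mod_cast min_le_right δ ε

theorem uss_pos_of_msos_pos (h0 : f (xbar, ybar) = 0) (hP2 : P2 f ybar)
    (hd : 0 < msos f xbar ybar) : 0 < uss f xbar ybar := by
  obtain ⟨γ, hγ, ρ₀, hρ₀, H⟩ := exists_forall_lt_of_pos_iSup_iInf
    (G := fun ρ p => max (lslope f ρ p) (equot (f p) (dist p.1 xbar)))
    (R := fun ρ p => dist p.1 xbar < ρ ∧ 0 < f p ∧ f p < ρ)
    (fun _ _ _ hρ hρρ' => max_le_max (lslope_anti hρ hρρ') le_rfl)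
    (fun _ _ _ => slope_region_mono) hd
  obtain ⟨c₂, hc₂, ε₂, hε₂, hP2'⟩ := hP2.exists_mul_dist_lt
  have hc : 0 < γ / 2 := half_pos hγ
  set ρ := min ρ₀ (min ε₂ (c₂ / (γ / 2)))
  have hρ : 0 < ρ := by positivity
  have hρε₂ : ρ ≤ ε₂ := (min_le_right _ _).trans (min_le_left _ _)
  have hcρ : γ / 2 * ρ ≤ c₂ := (le_div_iff₀' hc).mp ((min_le_right _ _).trans (min_le_right _ _))
  refine pos_iSup_iInf_of_forall_le hc hρ fun p ⟨h1, h2, h3⟩ => ?_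
  by_contra! hlt
  have hP2p := hP2' p h2 (h3.trans_le (EReal.coe_le_coe_iff.mpr hρε₂))
  have hmax := max_le (lslope_le_of_nslope_le hρ hc.le h2 hlt.le)
    (equot_dist_fst_le_of_nslope_le h0 hρ hc.le hcρ h2 hP2p hlt.le)
  have : γ < γ / 2 := by
    exact_mod_cast (H ρ hρ (min_le_left _ _) p ⟨h1, h2, h3⟩).trans_le hmax
  linarith

end Criteria

theorem statement10_general {X Y : Type*} [MetricSpace X] [CompleteSpace X] [MetricSpace Y] [CompleteSpace Y]
    (f : X × Y → EReal) (xbar : X) (ybar : Y)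
    (h0 : f (xbar, ybar) = 0)
    (hP1 : P1 f ybar) (hP2 : P2 f ybar)
    (hlsc : ∃ U ∈ 𝓝 (xbar, ybar), LowerSemicontinuousOn (fplus f) U) :
    ((0 < uss f xbar ybar ∨
      0 < liminf (fun p : X × Y => equot (f p) (dist p.1 xbar))
            ((𝓝 xbar).comap Prod.fst ⊓ (𝓝[>] (0 : EReal)).comap f) ∨
      0 < sos f xbar ybar ∨
      0 < msos f xbar ybar) →
      ∃ τ : ℝ, 0 < τ ∧ hasErrorBound f xbar ybar τ) ∧
    ((∃ τ : ℝ, 0 < τ ∧ hasErrorBound f xbar ybar τ) → 0 < uss f xbar ybar) := by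
  refine ⟨fun h => exists_hasErrorBound_of_uss_pos h0 hP1 hP2 hlsc ?_,
    fun ⟨τ, hτ, hEB⟩ => uss_pos_of_hasErrorBound h0 hP2 hτ hEB⟩
  rcases h with ha | hb | hc | hd
  · exact ha
  · exact uss_pos_of_msos_pos h0 hP2 (msos_pos_of_liminf_pos hb)
  · exact uss_pos_of_msos_pos h0 hP2 (msos_pos_of_sos_pos hc)
  · exact uss_pos_of_msos_pos h0 hP2 hd

/-- sufficient (and, for (a), necessary) criteria for the error bound property. -/
theorem statement10 {X Y : Type*} [MetricSpace X] [CompleteSpace X] [MetricSpace Y] [CompleteSpace Y]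
    (f : X × Y → EReal) (xbar : X) (ybar : Y)
    (hbot : ∀ p, f p ≠ ⊥) (h0 : f (xbar, ybar) = 0)
    (hP1 : P1 f ybar) (hP2 : P2 f ybar)
    (hlsc : ∃ U ∈ 𝓝 (xbar, ybar), LowerSemicontinuousOn (fplus f) U) :
    ((0 < uss f xbar ybar ∨
      0 < liminf (fun p : X × Y => equot (f p) (dist p.1 xbar))
            ((𝓝 xbar).comap Prod.fst ⊓ (𝓝[>] (0 : EReal)).comap f) ∨
      0 < sos f xbar ybar ∨
      0 < msos f xbar ybar) →
      ∃ τ : ℝ, 0 < τ ∧ hasErrorBound f xbar ybar τ) ∧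
    ((∃ τ : ℝ, 0 < τ ∧ hasErrorBound f xbar ybar τ) → 0 < uss f xbar ybar) :=
  statement10_general f xbar ybar h0 hP1 hP2 hlsc

end HolderPaper
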